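/- (Theorem 1) Let n be a positive integer and define Π_{t,n}(u) = (1/n) Σ_{k∈ℤ} p_t(u − 2k/n) for u ∈ [−1,1]. Then for every t with t n^a ≥ 1, with L = ⌊t n^a⌋: sup_{u∈[−1,1]} |Π_{t,n}(u) − 1/2| ≤ 2 (1 − 4Q_1)^{L−1} · sup_{u∈[−2,2)} |P̄_1(u) − 1/4|. -/

import Mathlib

/-!
Put `s = t nᵃ`. Self-similarity gives `Π_{t,n}(u) = P̄ₛ(nu) + P̄ₛ(nu - 2)`, so it suffices to
bound `|P̄ₛ - 1/4|`. The 4-periodizations inherit the semigroup law as convolutions on `ℝ/4ℤ`: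
`P̄_{s+r}(u) = ∫_{[-2,2)} P̄ₛ(v) P̄ᵣ(u - v) dv`. Convolving with a probability density does not
increase `sup |P̄ᵣ - 1/4|`, and convolving with `P̄₁ ≥ Q₁` multiplies it by at most `1 - 4Q₁`
(Doeblin: the part `Q₁` of `P̄₁` maps `P̄ᵣ` to the constant `Q₁`). Peeling `⌊s⌋ - 1` unit time
steps off `s` gives the bound. All sum/integral interchanges are done in `ℝ≥0∞`; the supremum at
time 1 is finite because `P̄_{2r}(u) ≤ 2 P̄_{2r}(0)` by AM-GM and evenness.
-/

open MeasureTheory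

/-- 4-periodization `P̄ₜ (u) = ∑ₖ pₜ (u - 4k)` of the family of densities `p`. -/
noncomputable def Pbar (p : ℝ → ℝ → ℝ) (t u : ℝ) : ℝ := ∑' k : ℤ, p t (u - 4 * k)

/-- `Qₜ = inf_{u ∈ [-2,2)} P̄ₜ (u)`. -/
noncomputable def Qinf (p : ℝ → ℝ → ℝ) (t : ℝ) : ℝ := sInf (Pbar p t '' Set.Ico (-2 : ℝ) 2)

/-- `Π_{t,n} (u) = (1/n) ∑ₖ pₜ (u - 2k/n)`, the density at time `t` of the diffusion
on `[-1,1]` with reflecting edges and `n`-periodic initial conditions. -/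
noncomputable def PiTN (p : ℝ → ℝ → ℝ) (t : ℝ) (n : ℕ) (u : ℝ) : ℝ :=
  (1 / n) * ∑' k : ℤ, p t (u - 2 * k / n)

open Set Function
open scoped ENNReal

theorem ENNReal.mul_le_mul_self_add_mul_self (x y : ℝ≥0∞) : x * y ≤ x * x + y * y := by
  rcases le_total x y with h | h
  · exact (mul_le_mul_left h y).trans le_add_self
  · exact (mul_le_mul_right h x).trans le_self_add

section Periodization

variable {T : ℝ}

theorem Function.Periodic.setLIntegral_Ico_comp_sub {f : ℝ → ℝ≥0∞} (hf : Periodic f T)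
    (hT : 0 < T) (t c : ℝ) :
    ∫⁻ v in Ico t (t + T), f (c - v) = ∫⁻ v in Ico t (t + T), f v := by
  have hpre : (fun v => c - v) ⁻¹' Ioc (c - t - T) (c - t - T + T) = Ico t (t + T) := by
    rw [preimage_const_sub_Ioc]; congr 1 <;> ring
  calc ∫⁻ v in Ico t (t + T), f (c - v) = ∫⁻ v in Ioc (c - t - T) (c - t - T + T), f v := by
        rw [← hpre]
        exact (Measure.measurePreserving_sub_left volume c).setLIntegral_comp_preimage_emb
          (measurableEmbedding_subLeft c) _ _
    _ = ∫⁻ v in Ioc t (t + T), f v :=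
        (isAddFundamentalDomain_Ioc hT _ volume).setLIntegral_eq
          (isAddFundamentalDomain_Ioc hT t volume) f hf.map_vadd_zmultiples
    _ = ∫⁻ v in Ico t (t + T), f v := by rw [Measure.restrict_congr_set Ico_ae_eq_Ioc]

theorem lintegral_eq_tsum_setLIntegral_Ico (hT : 0 < T) (t : ℝ) (f : ℝ → ℝ≥0∞) :
    ∫⁻ v, f v = ∑' k : ℤ, ∫⁻ v in Ico t (t + T), f (v - T * k) := by
  let e : ℤ ≃ AddSubgroup.zmultiples T :=
    Equiv.ofBijective (fun k => ⟨(-k) • T, -k, rfl⟩) ⟨fun a b h => by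
      simpa [hT.ne'] using congrArg Subtype.val h,
      fun ⟨_, k, hk⟩ => ⟨-k, Subtype.ext (by simpa using hk)⟩⟩
  rw [(isAddFundamentalDomain_Ioc hT t volume).lintegral_eq_tsum'', ← e.tsum_eq,
    Measure.restrict_congr_set Ico_ae_eq_Ioc]
  refine tsum_congr fun k => lintegral_congr fun v => ?_
  simp only [e, Equiv.ofBijective_apply, AddSubgroup.vadd_def, vadd_eq_add, neg_smul, zsmul_eq_mul]
  ring_nf

noncomputable def periodize (T : ℝ) (f : ℝ → ℝ≥0∞) (u : ℝ) : ℝ≥0∞ := ∑' k : ℤ, f (u - T * k)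

variable {f g : ℝ → ℝ≥0∞}

theorem periodize_periodic (T : ℝ) (f : ℝ → ℝ≥0∞) : Periodic (periodize T f) T := fun u => by
  rw [periodize, ← (Equiv.addRight (1 : ℤ)).tsum_eq]
  refine tsum_congr fun k => congrArg f ?_
  push_cast [Equiv.coe_addRight]
  ring

theorem measurable_periodize (hf : Measurable f) : Measurable (periodize T f) :=
  .tsum fun _ => hf.comp (measurable_id.sub_const _)

theorem periodize_neg (hf : ∀ u, f (-u) = f u) (u : ℝ) : periodize T f (-u) = periodize T f u := by
  rw [periodize, ← (Equiv.neg ℤ).tsum_eq]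
  refine tsum_congr fun k => ?_
  rw [← hf]
  push_cast [Equiv.neg_apply]
  ring_nf

theorem lintegral_mul_eq_setLIntegral_periodize_mul (hT : 0 < T) (t : ℝ) (hf : Measurable f)
    (hg : Measurable g) (hgT : Periodic g T) :
    ∫⁻ v, f v * g v = ∫⁻ v in Ico t (t + T), periodize T f v * g v := by
  rw [lintegral_eq_tsum_setLIntegral_Ico hT t]
  calc ∑' k : ℤ, ∫⁻ v in Ico t (t + T), f (v - T * k) * g (v - T * k)
      = ∑' k : ℤ, ∫⁻ v in Ico t (t + T), f (v - T * k) * g v := by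
        refine tsum_congr fun k => lintegral_congr fun v => ?_
        rw [mul_comm T, hgT.sub_int_mul_eq]
    _ = ∫⁻ v in Ico t (t + T), ∑' k : ℤ, f (v - T * k) * g v :=
        (lintegral_tsum fun k => ((hf.comp (measurable_id.sub_const _)).mul hg).aemeasurable).symm
    _ = ∫⁻ v in Ico t (t + T), periodize T f v * g v := by
        simp only [ENNReal.tsum_mul_right, periodize]

theorem setLIntegral_periodize (hT : 0 < T) (t : ℝ) (hf : Measurable f) :
    ∫⁻ v in Ico t (t + T), periodize T f v = ∫⁻ v, f v := by
  simpa using (lintegral_mul_eq_setLIntegral_periodize_mul hT t hf measurable_const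
    (g := fun _ => 1) fun _ => rfl).symm

theorem periodize_lconvolution (hf : Measurable f) (hg : Measurable g) (u : ℝ) :
    periodize T (f ⋆ₗ g) u = ∫⁻ v, f v * periodize T g (u - v) := by
  simp only [periodize, lconvolution_def]
  rw [← lintegral_tsum (f := fun (k : ℤ) v => f v * g (-v + (u - T * k))) fun k => by fun_prop]
  refine lintegral_congr fun v => ?_
  rw [← ENNReal.tsum_mul_left]
  refine tsum_congr fun k => ?_
  ring_nf

theorem periodize_lconvolution_eq_setLIntegral (hT : 0 < T) (t : ℝ) (hf : Measurable f)
    (hg : Measurable g) (u : ℝ) :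
    periodize T (f ⋆ₗ g) u = ∫⁻ v in Ico t (t + T), periodize T f v * periodize T g (u - v) := by
  rw [periodize_lconvolution hf hg]
  exact lintegral_mul_eq_setLIntegral_periodize_mul hT t hf
    ((measurable_periodize hg).comp (measurable_const.sub measurable_id))
    ((periodize_periodic T g).const_sub u)

theorem periodize_lconvolution_self_le_two_mul (hT : 0 < T) (hf : Measurable f)
    (hf_even : ∀ u, f (-u) = f u) (u : ℝ) :
    periodize T (f ⋆ₗ f) u ≤ 2 * periodize T (f ⋆ₗ f) 0 := by
  set P := periodize T f
  have hP : Measurable fun v => P v * P v := (measurable_periodize hf).mul (measurable_periodize hf)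
  have h0 : periodize T (f ⋆ₗ f) 0 = ∫⁻ v in Ico 0 (0 + T), P v * P v := by
    rw [periodize_lconvolution_eq_setLIntegral hT 0 hf hf]
    simp only [zero_sub, periodize_neg hf_even, P]
  calc periodize T (f ⋆ₗ f) u = ∫⁻ v in Ico 0 (0 + T), P v * P (u - v) :=
        periodize_lconvolution_eq_setLIntegral hT 0 hf hf u
    _ ≤ ∫⁻ v in Ico 0 (0 + T), (P v * P v + P (u - v) * P (u - v)) :=
        lintegral_mono fun v => ENNReal.mul_le_mul_self_add_mul_self _ _
    _ = 2 * periodize T (f ⋆ₗ f) 0 := by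
        rw [lintegral_add_left hP, ((periodize_periodic T f).mul
          (periodize_periodic T f)).setLIntegral_Ico_comp_sub hT 0 u (f := fun v => P v * P v),
          ← h0, two_mul]

end Periodization

theorem ENNReal.ofReal_mul_mem_Icc_lintegral_mul {α : Type*} [MeasurableSpace α] {μ : Measure α}
    {w X : α → ℝ≥0∞} {m a b : ℝ} (hw : Measurable w) (hm : 0 ≤ m)
    (hwm : ∫⁻ x, w x ∂μ = ENNReal.ofReal m)
    (hX : ∀ x, X x ∈ Icc (ENNReal.ofReal a) (ENNReal.ofReal b)) :
    ∫⁻ x, w x * X x ∂μ ∈ Icc (ENNReal.ofReal (m * a)) (ENNReal.ofReal (m * b)) := by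
  rw [ENNReal.ofReal_mul hm, ENNReal.ofReal_mul hm, ← hwm, ← lintegral_mul_const _ hw,
    ← lintegral_mul_const _ hw]
  exact ⟨lintegral_mono fun x => mul_le_mul_right (hX x).1 _,
    lintegral_mono fun x => mul_le_mul_right (hX x).2 _⟩

theorem ENNReal.abs_toReal_sub_le_of_mem_Icc {x : ℝ≥0∞} {c M : ℝ} (hcM : 0 ≤ c + M)
    (hx : x ∈ Icc (ENNReal.ofReal (c - M)) (ENNReal.ofReal (c + M))) : |x.toReal - c| ≤ M := by
  have hx_top : x ≠ ∞ := ne_top_of_le_ne_top ENNReal.ofReal_ne_top hx.2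
  have hlo := (ENNReal.ofReal_le_iff_le_toReal hx_top).1 hx.1
  have hhi := ENNReal.toReal_le_of_le_ofReal hcM hx.2
  exact abs_le.2 ⟨by linarith, by linarith⟩

section Doeblin

variable {T t q : ℝ} {K X : ℝ → ℝ≥0∞}

theorem setLIntegral_Ico_ofReal (hq : 0 ≤ q) :
    ∫⁻ _ in Ico t (t + T), ENNReal.ofReal q = ENNReal.ofReal (q * T) := by
  rw [setLIntegral_const, Real.volume_Ico, add_sub_cancel_left, ENNReal.ofReal_mul hq]

theorem mul_le_one_of_ofReal_le_of_setLIntegral_eq_one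
    (hK : ∫⁻ v in Ico t (t + T), K v = 1) (hq : 0 ≤ q)
    (hKq : ∀ v ∈ Ico t (t + T), ENNReal.ofReal q ≤ K v) : q * T ≤ 1 := by
  have : ENNReal.ofReal (q * T) ≤ 1 :=
    setLIntegral_Ico_ofReal hq ▸ hK ▸ setLIntegral_mono' measurableSet_Ico hKq
  simpa using ENNReal.ofReal_le_one.1 this

/-- Doeblin's contraction for a kernel `K ≥ q` on one period: write `K = q + (K - q)`; the constant
part sends `X` to `q`, and `K - q` has mass `1 - qT`. -/
theorem setLIntegral_mul_mem_Icc_of_ofReal_le (hT : 0 < T) (hK : Measurable K) (hX : Measurable X)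
    (hKmass : ∫⁻ v in Ico t (t + T), K v = 1) (hq : 0 ≤ q)
    (hKq : ∀ v ∈ Ico t (t + T), ENNReal.ofReal q ≤ K v)
    (hXmass : ∫⁻ v in Ico t (t + T), X v = 1) {M : ℝ} (hM : 0 ≤ M)
    (hXM : ∀ v, X v ∈ Icc (ENNReal.ofReal (1 / T - M)) (ENNReal.ofReal (1 / T + M))) :
    ∫⁻ v in Ico t (t + T), K v * X v ∈
      Icc (ENNReal.ofReal (1 / T - (1 - q * T) * M))
        (ENNReal.ofReal (1 / T + (1 - q * T) * M)) := by
  have hqT := mul_le_one_of_ofReal_le_of_setLIntegral_eq_one hKmass hq hKq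
  have hrest : ∫⁻ v in Ico t (t + T), (K v - ENNReal.ofReal q) = ENNReal.ofReal (1 - q * T) := by
    rw [lintegral_sub measurable_const (setLIntegral_Ico_ofReal hq ▸ ENNReal.ofReal_ne_top)
      ((ae_restrict_iff' measurableSet_Ico).2 (.of_forall hKq)), hKmass,
      setLIntegral_Ico_ofReal hq, ENNReal.ofReal_sub _ (by positivity), ENNReal.ofReal_one]
  have hsplit : ∫⁻ v in Ico t (t + T), K v * X v =
      ENNReal.ofReal q + ∫⁻ v in Ico t (t + T), (K v - ENNReal.ofReal q) * X v := by
    calc ∫⁻ v in Ico t (t + T), K v * X v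
        = ∫⁻ v in Ico t (t + T), (ENNReal.ofReal q * X v + (K v - ENNReal.ofReal q) * X v) :=
          setLIntegral_congr_fun measurableSet_Ico fun v hv => by
            rw [← add_mul, add_tsub_cancel_of_le (hKq v hv)]
      _ = _ := by rw [lintegral_add_left (hX.const_mul _), lintegral_const_mul _ hX,
          hXmass, mul_one]
  obtain ⟨hlo, hhi⟩ := ENNReal.ofReal_mul_mem_Icc_lintegral_mul (hK.sub measurable_const)
    (sub_nonneg.2 hqT) hrest hXM
  have hTT : q + (1 - q * T) * (1 / T) = 1 / T := by field_simp; ring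
  rw [hsplit]
  constructor
  · calc ENNReal.ofReal (1 / T - (1 - q * T) * M)
        = ENNReal.ofReal (q + (1 - q * T) * (1 / T - M)) := by congr 1; linear_combination -hTT
      _ ≤ ENNReal.ofReal q + ENNReal.ofReal ((1 - q * T) * (1 / T - M)) := ENNReal.ofReal_add_le
      _ ≤ _ := add_le_add le_rfl hlo
  · calc _ ≤ ENNReal.ofReal q + ENNReal.ofReal ((1 - q * T) * (1 / T + M)) := add_le_add le_rfl hhi
      _ = ENNReal.ofReal (1 / T + (1 - q * T) * M) := by
        rw [← ENNReal.ofReal_add hq (mul_nonneg (sub_nonneg.2 hqT) (by positivity))]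
        congr 1; linear_combination hTT

end Doeblin

theorem HasSum.int_even_add_odd {α : Type*} [AddCommMonoid α] [TopologicalSpace α]
    [ContinuousAdd α] {f : ℤ → α} {a b : α} (he : HasSum (fun k => f (2 * k)) a)
    (ho : HasSum (fun k => f (2 * k + 1)) b) : HasSum f (a + b) := by
  have := mul_right_injective₀ (two_ne_zero' ℤ)
  replace ho := ((add_left_injective 1).comp this).hasSum_range_iff.2 ho
  refine (this.hasSum_range_iff.2 he).add_isCompl ?_ ho
  simpa [Function.comp_def] using Int.isCompl_even_odd

theorem apply_eq_mul_apply_rescale {p : ℝ → ℝ → ℝ} {a t l : ℝ} (ha : a ≠ 0)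
    (hscal : ∀ t, 0 < t → ∀ u : ℝ, p t u = t ^ (-1 / a) * p 1 (t ^ (-1 / a) * u))
    (ht : 0 < t) (hl : 0 < l) (x : ℝ) : p t x = l * p (t * l ^ a) (l * x) := by
  have hrpow : (t * l ^ a) ^ (-1 / a) = t ^ (-1 / a) * l⁻¹ := by
    rw [Real.mul_rpow ht.le (by positivity), ← Real.rpow_mul hl.le, mul_div_cancel₀ _ ha,
      Real.rpow_neg_one]
  rw [hscal t ht x, hscal _ (by positivity) (l * x), hrpow]
  field_simp

structure IsDensitySemigroup (p : ℝ → ℝ → ℝ) : Prop where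
  measurable : ∀ t, 0 < t → Measurable (p t)
  nonneg : ∀ t, 0 < t → ∀ u, 0 ≤ p t u
  even : ∀ t, 0 < t → ∀ u, p t (-u) = p t u
  integral_eq_one : ∀ t, 0 < t → ∫ u, p t u = 1
  bddAbove : ∀ t, 0 < t → ∃ C : ℝ, ∀ u, p t u ≤ C
  conv : ∀ s t : ℝ, 0 < s → 0 < t → ∀ u, p (s + t) u = ∫ v, p s v * p t (u - v)
  summable : ∀ t, 0 < t → ∀ u : ℝ, Summable fun k : ℤ => p t (u - 4 * k)

noncomputable def ennDensity (p : ℝ → ℝ → ℝ) (t u : ℝ) : ℝ≥0∞ := ENNReal.ofReal (p t u)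

namespace IsDensitySemigroup

variable {p : ℝ → ℝ → ℝ} {s t : ℝ}

theorem measurable_ennDensity (hp : IsDensitySemigroup p) (ht : 0 < t) :
    Measurable (ennDensity p t) :=
  ENNReal.measurable_ofReal.comp (hp.measurable t ht)

theorem lintegral_ennDensity (hp : IsDensitySemigroup p) (ht : 0 < t) :
    ∫⁻ u, ennDensity p t u = 1 := by
  have hint := Integrable.of_integral_ne_zero (hp.integral_eq_one t ht ▸ one_ne_zero)
  unfold ennDensity
  rw [← ofReal_integral_eq_lintegral_ofReal hint (.of_forall (hp.nonneg t ht)),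
    hp.integral_eq_one t ht, ENNReal.ofReal_one]

theorem ennDensity_add (hp : IsDensitySemigroup p) (hs : 0 < s) (ht : 0 < t) :
    ennDensity p (s + t) = ennDensity p s ⋆ₗ ennDensity p t := by
  funext u
  obtain ⟨C, hC⟩ := hp.bddAbove t ht
  -- boundedness of `p t` is what makes the Bochner integral in `conv` a genuine Lebesgue integral
  have hint : Integrable fun v => p s v * p t (u - v) :=
    (Integrable.of_integral_ne_zero (hp.integral_eq_one s hs ▸ one_ne_zero)).mul_bdd
      ((hp.measurable t ht).comp (measurable_const.sub measurable_id)).aestronglyMeasurable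
      (.of_forall fun v => by
        rw [Real.norm_of_nonneg (hp.nonneg t ht _)]; exact hC _)
  show ENNReal.ofReal (p (s + t) u) = _
  rw [hp.conv s t hs ht, ofReal_integral_eq_lintegral_ofReal hint
    (.of_forall fun v => mul_nonneg (hp.nonneg s hs v) (hp.nonneg t ht _)), lconvolution_def]
  refine lintegral_congr fun v => ?_
  rw [ENNReal.ofReal_mul (hp.nonneg s hs v), neg_add_eq_sub, ennDensity, ennDensity]

theorem periodize_eq_ofReal_pbar (hp : IsDensitySemigroup p) (ht : 0 < t) (u : ℝ) :
    periodize 4 (ennDensity p t) u = ENNReal.ofReal (Pbar p t u) :=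
  (ENNReal.ofReal_tsum_of_nonneg (fun _ => hp.nonneg t ht _) (hp.summable t ht u)).symm

theorem hasSum_pbar (hp : IsDensitySemigroup p) (ht : 0 < t) (u : ℝ) :
    HasSum (fun k : ℤ => p t (u - 4 * k)) (Pbar p t u) :=
  (hp.summable t ht u).hasSum

theorem pbar_nonneg (hp : IsDensitySemigroup p) (ht : 0 < t) (u : ℝ) : 0 ≤ Pbar p t u :=
  tsum_nonneg fun _ => hp.nonneg t ht _

theorem pbar_eq_toReal (hp : IsDensitySemigroup p) (ht : 0 < t) (u : ℝ) :
    Pbar p t u = (periodize 4 (ennDensity p t) u).toReal := by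
  rw [hp.periodize_eq_ofReal_pbar ht, ENNReal.toReal_ofReal (hp.pbar_nonneg ht u)]

theorem periodic_pbar (hp : IsDensitySemigroup p) (ht : 0 < t) : Periodic (Pbar p t) 4 :=
  fun u => by
  rw [hp.pbar_eq_toReal ht, hp.pbar_eq_toReal ht, periodize_periodic]

theorem periodize_le_two_mul (hp : IsDensitySemigroup p) (ht : 0 < t) (u : ℝ) :
    periodize 4 (ennDensity p t) u ≤ 2 * periodize 4 (ennDensity p t) 0 := by
  have h2 : 0 < t / 2 := half_pos ht
  rw [← add_halves t, hp.ennDensity_add h2 h2]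
  exact periodize_lconvolution_self_le_two_mul (by norm_num) (hp.measurable_ennDensity h2)
    (fun u => congrArg ENNReal.ofReal (hp.even _ h2 u)) u

theorem bddAbove_abs_pbar_sub (hp : IsDensitySemigroup p) (ht : 0 < t) (S : Set ℝ) :
    BddAbove ((fun u => |Pbar p t u - 1 / 4|) '' S) := by
  refine ⟨(2 * periodize 4 (ennDensity p t) 0).toReal + 1 / 4, ?_⟩
  rintro _ ⟨u, -, rfl⟩
  have hfin : 2 * periodize 4 (ennDensity p t) 0 ≠ ∞ := by
    rw [hp.periodize_eq_ofReal_pbar ht]; exact ENNReal.mul_ne_top (by simp) ENNReal.ofReal_ne_top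
  have hle : Pbar p t u ≤ (2 * periodize 4 (ennDensity p t) 0).toReal := by
    rw [hp.pbar_eq_toReal ht]; exact ENNReal.toReal_mono hfin (hp.periodize_le_two_mul ht u)
  have := hp.pbar_nonneg ht u
  exact abs_le.2 ⟨by linarith [ENNReal.toReal_nonneg (a := 2 * periodize 4 (ennDensity p t) 0)],
    by linarith⟩

theorem abs_pbar_sub_le_sSup (hp : IsDensitySemigroup p) (ht : 0 < t) (w : ℝ) :
    |Pbar p t w - 1 / 4| ≤ sSup ((fun u => |Pbar p t u - 1 / 4|) '' Ico (-2 : ℝ) 2) := by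
  obtain ⟨v, hv, hwv⟩ := (hp.periodic_pbar ht).exists_mem_Ico (by norm_num) w (-2)
  norm_num at hv
  rw [hwv]
  exact le_csSup (hp.bddAbove_abs_pbar_sub ht _) ⟨v, hv, rfl⟩

theorem qinf_nonneg (hp : IsDensitySemigroup p) (ht : 0 < t) : 0 ≤ Qinf p t :=
  Real.sInf_nonneg (by rintro _ ⟨u, -, rfl⟩; exact hp.pbar_nonneg ht u)

theorem ofReal_qinf_le_periodize (hp : IsDensitySemigroup p) (ht : 0 < t) {v : ℝ}
    (hv : v ∈ Ico (-2 : ℝ) (-2 + 4)) :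
    ENNReal.ofReal (Qinf p t) ≤ periodize 4 (ennDensity p t) v := by
  rw [hp.periodize_eq_ofReal_pbar ht]
  norm_num at hv
  exact ENNReal.ofReal_le_ofReal (csInf_le ⟨0, by rintro _ ⟨u, -, rfl⟩; exact hp.pbar_nonneg ht u⟩
    ⟨v, hv, rfl⟩)

theorem setLIntegral_periodize_ennDensity (hp : IsDensitySemigroup p) (ht : 0 < t) :
    ∫⁻ v in Ico (-2 : ℝ) (-2 + 4), periodize 4 (ennDensity p t) v = 1 := by
  rw [setLIntegral_periodize (by norm_num) _ (hp.measurable_ennDensity ht),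
    hp.lintegral_ennDensity ht]

theorem qinf_mul_four_le_one (hp : IsDensitySemigroup p) (ht : 0 < t) : Qinf p t * 4 ≤ 1 :=
  mul_le_one_of_ofReal_le_of_setLIntegral_eq_one (hp.setLIntegral_periodize_ennDensity ht)
    (hp.qinf_nonneg ht) fun _ hv => hp.ofReal_qinf_le_periodize ht hv

theorem periodize_mem_Icc (hp : IsDensitySemigroup p) {M : ℝ} (ht : 0 < t) {w : ℝ}
    (hw : |Pbar p t w - 1 / 4| ≤ M) :
    periodize 4 (ennDensity p t) w ∈
      Icc (ENNReal.ofReal (1 / 4 - M)) (ENNReal.ofReal (1 / 4 + M)) := by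
  rw [hp.periodize_eq_ofReal_pbar ht]
  obtain ⟨hlo, hhi⟩ := abs_le.1 hw
  exact ⟨ENNReal.ofReal_le_ofReal (by linarith), ENNReal.ofReal_le_ofReal (by linarith)⟩

theorem abs_pbar_add_sub_le (hp : IsDensitySemigroup p) {M : ℝ} (hs : 0 < s) (ht : 0 < t)
    (hM : ∀ w, |Pbar p t w - 1 / 4| ≤ M) (u : ℝ) : |Pbar p (s + t) u - 1 / 4| ≤ M := by
  have hM0 : 0 ≤ M := (abs_nonneg _).trans (hM 0)
  rw [hp.pbar_eq_toReal (add_pos hs ht)]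
  refine ENNReal.abs_toReal_sub_le_of_mem_Icc (by positivity) ?_
  rw [hp.ennDensity_add hs ht, periodize_lconvolution (hp.measurable_ennDensity hs)
    (hp.measurable_ennDensity ht)]
  simpa using ENNReal.ofReal_mul_mem_Icc_lintegral_mul (hp.measurable_ennDensity hs) zero_le_one
    (by rw [hp.lintegral_ennDensity hs, ENNReal.ofReal_one])
    fun v => hp.periodize_mem_Icc ht (hM (u - v))

theorem abs_pbar_add_sub_le_mul (hp : IsDensitySemigroup p) {M : ℝ} (hs : 0 < s) (ht : 0 < t)
    (hM : ∀ w, |Pbar p t w - 1 / 4| ≤ M) (u : ℝ) :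
    |Pbar p (s + t) u - 1 / 4| ≤ (1 - 4 * Qinf p s) * M := by
  have hM0 : 0 ≤ M := (abs_nonneg _).trans (hM 0)
  have hq := hp.qinf_nonneg hs
  have hcontr := setLIntegral_mul_mem_Icc_of_ofReal_le (by norm_num : (0 : ℝ) < 4)
    (X := fun v => periodize 4 (ennDensity p t) (u - v))
    (measurable_periodize (hp.measurable_ennDensity hs))
    ((measurable_periodize (hp.measurable_ennDensity ht)).comp (measurable_const.sub measurable_id))
    (hp.setLIntegral_periodize_ennDensity hs) hq (fun v hv => hp.ofReal_qinf_le_periodize hs hv)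
    (by rw [(periodize_periodic 4 _).setLIntegral_Ico_comp_sub (by norm_num),
      hp.setLIntegral_periodize_ennDensity ht]) hM0
    fun v => hp.periodize_mem_Icc ht (hM (u - v))
  rw [← periodize_lconvolution_eq_setLIntegral (by norm_num) _ (hp.measurable_ennDensity hs)
    (hp.measurable_ennDensity ht), ← hp.ennDensity_add hs ht] at hcontr
  have h4q := hp.qinf_mul_four_le_one hs
  rw [hp.pbar_eq_toReal (add_pos hs ht), mul_comm 4]
  exact ENNReal.abs_toReal_sub_le_of_mem_Icc (by nlinarith) hcontr

theorem abs_pbar_natCast_add_sub_le (hp : IsDensitySemigroup p) {M : ℝ} (ht : 0 < t)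
    (hM : ∀ w, |Pbar p t w - 1 / 4| ≤ M) (j : ℕ) (w : ℝ) :
    |Pbar p (j + t) w - 1 / 4| ≤ (1 - 4 * Qinf p 1) ^ j * M := by
  induction j generalizing w with
  | zero => simpa using hM w
  | succ j ih =>
    have := hp.abs_pbar_add_sub_le_mul one_pos (by positivity) ih w
    rw [pow_succ', mul_assoc]
    rwa [Nat.cast_succ, add_comm (j : ℝ), add_assoc]

theorem abs_pbar_sub_le_pow_mul_sSup (hp : IsDensitySemigroup p) (ht : 1 ≤ t) (w : ℝ) :
    |Pbar p t w - 1 / 4| ≤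
      (1 - 4 * Qinf p 1) ^ (⌊t⌋₊ - 1) *
        sSup ((fun u => |Pbar p 1 u - 1 / 4|) '' Ico (-2 : ℝ) 2) := by
  have hL : 1 ≤ ⌊t⌋₊ := Nat.le_floor (by exact_mod_cast ht)
  have hr : 1 ≤ t - (⌊t⌋₊ - 1 : ℕ) := by
    rw [Nat.cast_sub hL, Nat.cast_one]
    linarith [Nat.floor_le (zero_le_one.trans ht)]
  -- start from time `t - (⌊t⌋₊ - 1) ∈ [1, 2)`, which is no worse than time `1` by averaging
  have hstart : ∀ w, |Pbar p (t - (⌊t⌋₊ - 1 : ℕ)) w - 1 / 4| ≤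
      sSup ((fun u => |Pbar p 1 u - 1 / 4|) '' Ico (-2 : ℝ) 2) := by
    rcases hr.eq_or_lt with h | h
    · rw [← h]
      exact hp.abs_pbar_sub_le_sSup one_pos
    · intro w
      simpa using hp.abs_pbar_add_sub_le (sub_pos.2 h) one_pos (hp.abs_pbar_sub_le_sSup one_pos) w
  simpa using hp.abs_pbar_natCast_add_sub_le (by linarith) hstart (⌊t⌋₊ - 1) w

theorem piTN_eq (hp : IsDensitySemigroup p) {a : ℝ} {n : ℕ}
    (ha : a ≠ 0) (hscal : ∀ t, 0 < t → ∀ u : ℝ, p t u = t ^ (-1 / a) * p 1 (t ^ (-1 / a) * u))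
    (hn : 0 < n) (ht : 0 < t) (u : ℝ) :
    PiTN p t n u = Pbar p (t * n ^ a) (n * u) + Pbar p (t * n ^ a) (n * u - 2) := by
  have hn' : (0 : ℝ) < n := by exact_mod_cast hn
  have hs : 0 < t * (n : ℝ) ^ a := by positivity
  have hsplit : HasSum (fun k : ℤ => p (t * n ^ a) (n * u - 2 * k))
      (Pbar p (t * n ^ a) (n * u) + Pbar p (t * n ^ a) (n * u - 2)) := by
    refine HasSum.int_even_add_odd ?_ ?_
    · convert hp.hasSum_pbar hs (n * u) using 3 with k
      push_cast; ring
    · convert hp.hasSum_pbar hs (n * u - 2) using 3 with k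
      push_cast; ring
  rw [PiTN, ← hsplit.tsum_eq, ← tsum_mul_left]
  refine tsum_congr fun k => ?_
  rw [apply_eq_mul_apply_rescale ha hscal ht hn']
  field_simp

end IsDensitySemigroup

theorem theorem1_general (a : ℝ) (ha : 0 < a) (p : ℝ → ℝ → ℝ)
    (hmeas : ∀ t, 0 < t → Measurable (p t))
    (hnn : ∀ t, 0 < t → ∀ u, 0 ≤ p t u)
    (heven : ∀ t, 0 < t → ∀ u, p t (-u) = p t u)
    (hone : ∀ t, 0 < t → ∫ u, p t u = 1)
    (hbdd : ∀ t, 0 < t → ∃ C : ℝ, ∀ u, p t u ≤ C)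
    (hconv : ∀ s t : ℝ, 0 < s → 0 < t → ∀ u, p (s + t) u = ∫ v, p s v * p t (u - v))
    (hsum : ∀ t, 0 < t → ∀ u : ℝ, Summable fun k : ℤ => p t (u - 4 * k))
    (hscal : ∀ t, 0 < t → ∀ u : ℝ, p t u = t ^ (-1 / a) * p 1 (t ^ (-1 / a) * u))
    (n : ℕ) (hn : 0 < n) (t : ℝ) (ht : 0 < t) (htn : 1 ≤ t * (n : ℝ) ^ a) :
    sSup ((fun u => |PiTN p t n u - 1 / 2|) '' Set.Icc (-1 : ℝ) 1)
      ≤ 2 * (1 - 4 * Qinf p 1) ^ (⌊t * (n : ℝ) ^ a⌋₊ - 1) *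
          sSup ((fun u => |Pbar p 1 u - 1 / 4|) '' Set.Ico (-2 : ℝ) 2) := by
  have hp : IsDensitySemigroup p := ⟨hmeas, hnn, heven, hone, hbdd, hconv, hsum⟩
  refine csSup_le ⟨_, ⟨-1, by norm_num, rfl⟩⟩ ?_
  rintro _ ⟨u, -, rfl⟩
  have h₁ := hp.abs_pbar_sub_le_pow_mul_sSup htn (n * u)
  have h₂ := hp.abs_pbar_sub_le_pow_mul_sSup htn (n * u - 2)
  dsimp only
  rw [hp.piTN_eq ha.ne' hscal hn ht]
  calc _ = |(Pbar p (t * n ^ a) (n * u) - 1 / 4) + (Pbar p (t * n ^ a) (n * u - 2) - 1 / 4)| := by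
        ring_nf
    _ ≤ _ := abs_add_le _ _
    _ ≤ _ := by linarith

/-- (Theorem 1) For `t nᵃ ≥ 1`, with `L = ⌊t nᵃ⌋`,
`sup_{u ∈ [-1,1]} |Π_{t,n}(u) - 1/2| ≤ 2 (1 - 4Q₁)^(L-1) sup_{u ∈ [-2,2)} |P̄₁(u) - 1/4|`. -/
theorem theorem1 (a : ℝ) (ha : 0 < a) (ha2 : a ≤ 2) (p : ℝ → ℝ → ℝ)
    (hmeas : ∀ t, 0 < t → Measurable (p t))
    (hnn : ∀ t, 0 < t → ∀ u, 0 ≤ p t u)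
    (heven : ∀ t, 0 < t → ∀ u, p t (-u) = p t u)
    (hone : ∀ t, 0 < t → ∫ u, p t u = 1)
    (hbdd : ∀ t, 0 < t → ∃ C : ℝ, ∀ u, p t u ≤ C)
    (hconv : ∀ s t : ℝ, 0 < s → 0 < t → ∀ u, p (s + t) u = ∫ v, p s v * p t (u - v))
    (hsum : ∀ t, 0 < t → ∀ u : ℝ, Summable fun k : ℤ => p t (u - 4 * k))
    (hQ : ∀ t, 0 < t → 0 < Qinf p t)
    (hscal : ∀ t, 0 < t → ∀ u : ℝ, p t u = t ^ (-1 / a) * p 1 (t ^ (-1 / a) * u))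
    (n : ℕ) (hn : 0 < n) (t : ℝ) (ht : 0 < t) (htn : 1 ≤ t * (n : ℝ) ^ a) :
    sSup ((fun u => |PiTN p t n u - 1 / 2|) '' Set.Icc (-1 : ℝ) 1)
      ≤ 2 * (1 - 4 * Qinf p 1) ^ (⌊t * (n : ℝ) ^ a⌋₊ - 1) *
          sSup ((fun u => |Pbar p 1 u - 1 / 4|) '' Set.Ico (-2 : ℝ) 2) :=
  theorem1_general a ha p hmeas hnn heven hone hbdd hconv hsum hscal n hn t ht htn
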